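/- arXiv:2201.03946 — 8 statements merged into one kernel-verified Lean document; each statement's English description precedes it below -/
import Mathlib

section
/- There is no two-point numerical flux F = (Fρ, Fρv, Fρe), assigning to every pair of admissible states (ρ₋, v₋, p₋), (ρ₊, v₊, p₊) (with ρ± > 0, p± > 0) a vector in ℝ³, that simultaneously satisfies: (i) consistency, i.e. F(u, u) = f(u) = (ρv, ρv² + p, (ρe + p)v) for every state u; (ii) entropy conservation in the sense of Tadmor for some member of Harten's one-parameter family of entropies with parameter α (α > 0 or α < −γ), i.e. ⟦w⟧·F − ⟦ψ⟧ = 0 for all pairs of states; (iii) pressure equilibrium preservation, i.e. there exist functions c₁(p, v) and c₂(p, v) such that whenever the two states share the same velocity v and pressure p, Fρv = v·Fρ + c₁(p, v) and Fρe = (1/2)v²·Fρ + c₂(p, v); and (iv) a density component Fρ that does not depend on the pressures p₋, p₊ (i.e. Fρ is a function of ρ₋, ρ₊, v₋, v₊ only). -/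
/-!
Nonexistence of a two-point numerical flux for the 1D compressible Euler
equations (ideal gas, ratio of specific heats `γ > 1`) that is simultaneously
consistent, entropy conservative (in the sense of Tadmor) for a member of
Harten's one-parameter family of entropies with parameter `α` (`α > 0` or
`α < -γ`), pressure equilibrium preserving, and has a density flux independent
of the pressure.

A state is a triple `(ρ, v, p)` with `ρ > 0`, `p > 0`; the conserved variables
are `u = (ρ, ρv, ρe)` with `ρe = p/(γ-1) + ρ v²/2` and physical flux
`f(u) = (ρv, ρv² + p, (ρe + p)v)`. The entropy variables and flux potential for
Harten's entropy `U = -((γ+α)/(γ-1)) ρ (p/ρ^γ)^(1/(α+γ))` are given below.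
-/

/-- First component of the entropy variables for Harten's entropy. -/
noncomputable def hartenW1 (γ α ρ v p : ℝ) : ℝ :=
  ρ / p * (p / ρ ^ γ) ^ (1 / (α + γ)) * (-(α / (γ - 1)) * (p / ρ) - v ^ 2 / 2)

/-- Second component of the entropy variables for Harten's entropy. -/
noncomputable def hartenW2 (γ α ρ v p : ℝ) : ℝ :=
  ρ / p * (p / ρ ^ γ) ^ (1 / (α + γ)) * v

/-- Third component of the entropy variables for Harten's entropy. -/
noncomputable def hartenW3 (γ α ρ v p : ℝ) : ℝ :=
  ρ / p * (p / ρ ^ γ) ^ (1 / (α + γ)) * (-1)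

/-- Flux potential associated with Harten's entropy. -/
noncomputable def hartenPsi (γ α ρ v p : ℝ) : ℝ :=
  ρ * (p / ρ ^ γ) ^ (1 / (α + γ)) * v

/-- Entropy conservation residual `⟦w⟧ ⬝ F - ⟦ψ⟧` of a numerical flux
`(Fρ, Fρv, Fρe)` at the pair of states `(ρm, vm, pm)`, `(ρp, vp, pp)`. -/
noncomputable def ecResidual (γ α ρm vm pm ρp vp pp Fρ Fρv Fρe : ℝ) : ℝ :=
  (hartenW1 γ α ρp vp pp - hartenW1 γ α ρm vm pm) * Fρ
    + (hartenW2 γ α ρp vp pp - hartenW2 γ α ρm vm pm) * Fρv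
    + (hartenW3 γ α ρp vp pp - hartenW3 γ α ρm vm pm) * Fρe
    - (hartenPsi γ α ρp vp pp - hartenPsi γ α ρm vm pm)

/-!
On a pair of states in pressure equilibrium, consistency fixes the constants of pressure
equilibrium preservation, and entropy conservation becomes a linear equation for the density
flux alone. The same holds on a pair of states with equal velocities along which the scale
`ρ θ / p` of the entropy variables is constant, since then only the first entropy variable
jumps. Choosing two such pairs that differ only in the pressure of one state, pressure
independence makes their density fluxes equal; eliminating it leaves an identity between
power functions of the density ratio `x` that fails as `x → ∞`, because one exponent strictly
dominates with non-zero coefficient.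
-/

open Filter Real Topology

/-- The factor `θ = (p / ρ ^ γ) ^ (1 / (α + γ))` common to the entropy variables and the
flux potential: `w = (ρ θ / p) (…)` and `ψ = ρ θ v`. -/
noncomputable def hartenTheta (γ α ρ p : ℝ) : ℝ :=
  (p / ρ ^ γ) ^ (1 / (α + γ))

lemma hartenTheta_rpow {x : ℝ} (hx : 0 < x) (γ α k : ℝ) :
    hartenTheta γ α x (x ^ k) = x ^ ((k - γ) / (α + γ)) := by
  rw [hartenTheta, ← rpow_sub hx, ← rpow_mul hx.le, mul_one_div]

section Residual

variable {γ α ρm ρp : ℝ}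

lemma ecResidual_of_pressure_equilibrium (hγ : γ ≠ 1) (hρm : ρm ≠ 0) (hρp : ρp ≠ 0)
    {p : ℝ} (hp : p ≠ 0) (v F : ℝ) :
    ecResidual γ α ρm v p ρp v p F (v * F + p) (1 / 2 * v ^ 2 * F + γ * p * v / (γ - 1)) =
      -(α * (hartenTheta γ α ρp p - hartenTheta γ α ρm p) * F
        + γ * v * (ρp * hartenTheta γ α ρp p - ρm * hartenTheta γ α ρm p)) / (γ - 1) := by
  unfold ecResidual hartenW1 hartenW2 hartenW3 hartenPsi hartenTheta
  field_simp
  ring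

lemma ecResidual_of_scale_eq (hγ : γ ≠ 1) (hρm : ρm ≠ 0) (hρp : ρp ≠ 0) {pm pp : ℝ}
    (hpm : pm ≠ 0) (hpp : pp ≠ 0)
    (hs : ρm / pm * hartenTheta γ α ρm pm = ρp / pp * hartenTheta γ α ρp pp) (v F G H : ℝ) :
    ecResidual γ α ρm v pm ρp v pp F G H =
      -(α * (hartenTheta γ α ρp pp - hartenTheta γ α ρm pm) * F
        + (γ - 1) * v * (ρp * hartenTheta γ α ρp pp - ρm * hartenTheta γ α ρm pm)) / (γ - 1) := by
  have hθ : hartenTheta γ α ρp pp = ρm / pm * hartenTheta γ α ρm pm * pp / ρp := by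
    rw [hs]; field_simp
  unfold ecResidual hartenW1 hartenW2 hartenW3 hartenPsi
  rw [← hartenTheta, ← hartenTheta, hθ]
  field_simp
  ring

end Residual

/-- A two-point flux component, as a function of `(ρ₋, v₋, p₋, ρ₊, v₊, p₊)`. -/
abbrev TwoPointFlux := ℝ → ℝ → ℝ → ℝ → ℝ → ℝ → ℝ

def IsConsistent (γ : ℝ) (Fρ Fρv Fρe : TwoPointFlux) : Prop :=
  ∀ ρ v p : ℝ, 0 < ρ → 0 < p →
    Fρ ρ v p ρ v p = ρ * v ∧
    Fρv ρ v p ρ v p = ρ * v ^ 2 + p ∧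
    Fρe ρ v p ρ v p = (p / (γ - 1) + ρ * v ^ 2 / 2 + p) * v

def IsEntropyConservative (γ α : ℝ) (Fρ Fρv Fρe : TwoPointFlux) : Prop :=
  ∀ ρm vm pm ρp vp pp : ℝ, 0 < ρm → 0 < pm → 0 < ρp → 0 < pp →
    ecResidual γ α ρm vm pm ρp vp pp
      (Fρ ρm vm pm ρp vp pp) (Fρv ρm vm pm ρp vp pp) (Fρe ρm vm pm ρp vp pp) = 0

def PreservesPressureEquilibrium (Fρ Fρv Fρe : TwoPointFlux) : Prop :=
  ∃ c₁ c₂ : ℝ → ℝ → ℝ, ∀ ρm ρp v p : ℝ, 0 < ρm → 0 < ρp → 0 < p →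
    Fρv ρm v p ρp v p = v * Fρ ρm v p ρp v p + c₁ p v ∧
    Fρe ρm v p ρp v p = 1 / 2 * v ^ 2 * Fρ ρm v p ρp v p + c₂ p v

def IsPressureIndependent (Fρ : TwoPointFlux) : Prop :=
  ∀ ρm vm pm ρp vp pp qm qp : ℝ,
    0 < ρm → 0 < ρp → 0 < pm → 0 < pp → 0 < qm → 0 < qp →
    Fρ ρm vm pm ρp vp pp = Fρ ρm vm qm ρp vp qp

section Flux

variable {γ α : ℝ} {Fρ Fρv Fρe : TwoPointFlux}

/-- Consistency pins down the constants `c₁ = p`, `c₂ = γ p v / (γ - 1)`, as seen at `ρ₋ = ρ₊`. -/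
lemma PreservesPressureEquilibrium.flux_eq (hpep : PreservesPressureEquilibrium Fρ Fρv Fρe)
    (hcons : IsConsistent γ Fρ Fρv Fρe) (hγ : γ ≠ 1) {ρm ρp p : ℝ} (hρm : 0 < ρm)
    (hρp : 0 < ρp) (hp : 0 < p) (v : ℝ) :
    Fρv ρm v p ρp v p = v * Fρ ρm v p ρp v p + p ∧
    Fρe ρm v p ρp v p = 1 / 2 * v ^ 2 * Fρ ρm v p ρp v p + γ * p * v / (γ - 1) := by
  obtain ⟨c₁, c₂, hpep⟩ := hpep
  obtain ⟨hρ, hρv, hρe⟩ := hcons 1 v p one_pos hp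
  obtain ⟨hρv', hρe'⟩ := hpep 1 1 v p one_pos one_pos hp
  have hc₁ : c₁ p v = p := by linear_combination hρv - hρv' - v * hρ
  have hc₂ : c₂ p v = γ * p * v / (γ - 1) := by
    rw [show c₂ p v = (p / (γ - 1) + p) * v by linear_combination hρe - hρe' - 1 / 2 * v ^ 2 * hρ]
    field_simp
    ring
  obtain ⟨h₁, h₂⟩ := hpep ρm ρp v p hρm hρp hp
  exact ⟨by rw [h₁, hc₁], by rw [h₂, hc₂]⟩

lemma IsEntropyConservative.density_flux_of_pressure_equilibrium
    (hec : IsEntropyConservative γ α Fρ Fρv Fρe) (hcons : IsConsistent γ Fρ Fρv Fρe)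
    (hpep : PreservesPressureEquilibrium Fρ Fρv Fρe) (hγ : γ ≠ 1) {ρm ρp p : ℝ}
    (hρm : 0 < ρm) (hρp : 0 < ρp) (hp : 0 < p) (v : ℝ) :
    α * (hartenTheta γ α ρp p - hartenTheta γ α ρm p) * Fρ ρm v p ρp v p
      + γ * v * (ρp * hartenTheta γ α ρp p - ρm * hartenTheta γ α ρm p) = 0 := by
  have h := hec ρm v p ρp v p hρm hp hρp hp
  obtain ⟨hρv, hρe⟩ := hpep.flux_eq hcons hγ hρm hρp hp v
  rw [hρv, hρe, ecResidual_of_pressure_equilibrium hγ hρm.ne' hρp.ne' hp.ne'] at h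
  rwa [neg_div, neg_eq_zero, div_eq_zero_iff, or_iff_left (sub_ne_zero.2 hγ)] at h

lemma IsEntropyConservative.density_flux_of_scale_eq (hec : IsEntropyConservative γ α Fρ Fρv Fρe)
    (hγ : γ ≠ 1) {ρm ρp pm pp : ℝ} (hρm : 0 < ρm) (hρp : 0 < ρp) (hpm : 0 < pm) (hpp : 0 < pp)
    (hs : ρm / pm * hartenTheta γ α ρm pm = ρp / pp * hartenTheta γ α ρp pp) (v : ℝ) :
    α * (hartenTheta γ α ρp pp - hartenTheta γ α ρm pm) * Fρ ρm v pm ρp v pp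
      + (γ - 1) * v * (ρp * hartenTheta γ α ρp pp - ρm * hartenTheta γ α ρm pm) = 0 := by
  have h := hec ρm v pm ρp v pp hρm hpm hρp hpp
  rw [ecResidual_of_scale_eq hγ hρm.ne' hρp.ne' hpm.ne' hpp.ne' hs] at h
  rwa [neg_div, neg_eq_zero, div_eq_zero_iff, or_iff_left (sub_ne_zero.2 hγ)] at h

end Flux

/-- Compares the pairs `(1, 1, 1)`, `(x, 1, 1)` and `(1, 1, 1)`, `(x, 1, x ^ m)` with
`m = α / (α + γ - 1)`, the exponent for which `ρ θ / p = 1` at `(x, 1, x ^ m)`. -/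
lemma IsEntropyConservative.power_identity {γ α : ℝ} {Fρ Fρv Fρe : TwoPointFlux}
    (hec : IsEntropyConservative γ α Fρ Fρv Fρe) (hcons : IsConsistent γ Fρ Fρv Fρe)
    (hpep : PreservesPressureEquilibrium Fρ Fρv Fρe) (hind : IsPressureIndependent Fρ)
    (hγ : γ ≠ 1) (hαγ : α + γ ≠ 0) (hαγ₁ : α + γ - 1 ≠ 0) {x : ℝ} (hx : 0 < x) :
    γ * (x ^ (1 - γ / (α + γ)) - 1) * (x ^ (α / (α + γ - 1) - 1) - 1) =
      (γ - 1) * (x ^ (α / (α + γ - 1)) - 1) * (x ^ (-(γ / (α + γ))) - 1) := by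
  set b := γ / (α + γ)
  set m := α / (α + γ - 1) with hm
  have hθ₁ : hartenTheta γ α 1 1 = 1 := by simp [hartenTheta]
  have hθA : hartenTheta γ α x 1 = x ^ (-b) := by
    simpa [neg_div] using hartenTheta_rpow hx γ α 0
  have hθB : hartenTheta γ α x (x ^ m) = x ^ (m - 1) := by
    rw [hartenTheta_rpow hx]
    congr 1
    rw [hm]
    field_simp
    ring
  have hxA : x * x ^ (-b) = x ^ (1 - b) := by
    rw [sub_eq_add_neg, rpow_add hx, rpow_one]
  have hxB : x * x ^ (m - 1) = x ^ m := by
    rw [mul_comm, ← rpow_add_one hx.ne', sub_add_cancel]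
  have hxm : 0 < x ^ m := rpow_pos_of_pos hx m
  have hA := hec.density_flux_of_pressure_equilibrium hcons hpep hγ one_pos hx one_pos 1
  have hB := hec.density_flux_of_scale_eq hγ one_pos hx one_pos hxm
    (by rw [hθ₁, hθB, div_one, one_mul, eq_comm, div_mul_eq_mul_div, hxB, div_self hxm.ne']) 1
  rw [hind 1 1 1 x 1 (x ^ m) 1 1 one_pos hx one_pos hxm one_pos one_pos] at hB
  rw [hθ₁, hθA, hxA] at hA
  rw [hθ₁, hθB, hxB] at hB
  linear_combination (x ^ (m - 1) - 1) * hA - (x ^ (-b) - 1) * hB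

/-- Divide by `x ^ e j` and let `x → ∞`. -/
lemma coeff_eq_zero_of_sum_rpow_eq_zero {ι : Type*} [Fintype ι] {a e : ι → ℝ} {j : ι}
    (hj : ∀ i, i ≠ j → e i < e j) (h : ∀ x : ℝ, 0 < x → ∑ i, a i * x ^ e i = 0) :
    a j = 0 := by
  classical
  have hlim : Tendsto (fun x : ℝ => ∑ i, a i * x ^ (-(e j - e i))) atTop
      (𝓝 (∑ i, if i = j then a j else 0)) := by
    refine tendsto_finsetSum _ fun i _ => ?_
    split_ifs with hij
    · subst hij
      simp
    · simpa using (tendsto_rpow_neg_atTop (sub_pos.2 (hj i hij))).const_mul (a i)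
  rw [Finset.sum_ite_eq' Finset.univ j (fun _ => a j), if_pos (Finset.mem_univ j)] at hlim
  refine tendsto_nhds_unique hlim (tendsto_const_nhds.congr' ?_)
  filter_upwards [eventually_gt_atTop 0] with x hx
  have hscale : ∀ i, x ^ (-(e j - e i)) = x ^ (-e j) * x ^ e i := fun i => by
    rw [← rpow_add hx]
    ring_nf
  simp only [hscale, mul_left_comm _ (x ^ (-e j)), ← Finset.mul_sum, h x hx, mul_zero]

section PowerIdentity

variable {γ b m x : ℝ}

lemma sum_rpow_eq_zero_of_power_identity (hx : 0 < x)
    (h : γ * (x ^ (1 - b) - 1) * (x ^ (m - 1) - 1) = (γ - 1) * (x ^ m - 1) * (x ^ (-b) - 1)) :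
    ∑ i, ![1, -γ, -γ, γ - 1, γ - 1, 1] i * x ^ (![m - b, 1 - b, m - 1, m, -b, 0] i) = 0 := by
  have h₁ : x ^ (1 - b) * x ^ (m - 1) = x ^ (m - b) := by
    rw [← rpow_add hx]
    ring_nf
  have h₂ : x ^ m * x ^ (-b) = x ^ (m - b) := by
    rw [← rpow_add hx, ← sub_eq_add_neg]
  simp only [Fin.sum_univ_six, Matrix.cons_val, rpow_zero]
  linear_combination h - γ * h₁ + (γ - 1) * h₂

/-- For `0 < m < 1 < b + m`, the exponent `m` dominates; its coefficient is `γ - 1`. -/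
lemma not_power_identity_of_pos (hγ : γ ≠ 1) (hm₀ : 0 < m) (hm₁ : m < 1)
    (hbm : 1 < b + m) :
    ¬ ∀ x : ℝ, 0 < x →
      γ * (x ^ (1 - b) - 1) * (x ^ (m - 1) - 1) = (γ - 1) * (x ^ m - 1) * (x ^ (-b) - 1) := by
  intro h
  have := coeff_eq_zero_of_sum_rpow_eq_zero (j := 3)
    (fun i hi => by fin_cases i <;> simp at hi ⊢ <;> linarith)
    (fun x hx => sum_rpow_eq_zero_of_power_identity hx (h x hx))
  exact hγ (by simpa [sub_eq_zero] using this)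

/-- For `b < 0 < 1 < m`, the exponent `m - b` dominates; its coefficient is `1`. -/
lemma not_power_identity_of_neg (hb : b < 0) (hm : 1 < m) :
    ¬ ∀ x : ℝ, 0 < x →
      γ * (x ^ (1 - b) - 1) * (x ^ (m - 1) - 1) = (γ - 1) * (x ^ m - 1) * (x ^ (-b) - 1) := by
  intro h
  have := coeff_eq_zero_of_sum_rpow_eq_zero (j := 0)
    (fun i hi => by fin_cases i <;> simp at hi ⊢ <;> linarith)
    (fun x hx => sum_rpow_eq_zero_of_power_identity hx (h x hx))
  simp at this

end PowerIdentity

/-- **Main theorem.** There is no two-point numerical flux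
`F = (Fρ, Fρv, Fρe)` (a function of the two states `(ρ₋, v₋, p₋)`,
`(ρ₊, v₊, p₊)`) that is consistent with the physical Euler flux, entropy
conservative for a member of Harten's one-parameter family of entropies,
pressure equilibrium preserving, and whose density component does not depend
on the pressures. -/
theorem no_harten_ec_pep_pressure_independent_density_flux (γ : ℝ) (hγ : 1 < γ) :
    ¬ ∃ (Fρ Fρv Fρe : ℝ → ℝ → ℝ → ℝ → ℝ → ℝ → ℝ) (α : ℝ),
      (0 < α ∨ α < -γ) ∧
      -- (i) consistency with the physical flux `f(u) = (ρv, ρv² + p, (ρe + p)v)`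
      (∀ ρ v p : ℝ, 0 < ρ → 0 < p →
        Fρ ρ v p ρ v p = ρ * v ∧
        Fρv ρ v p ρ v p = ρ * v ^ 2 + p ∧
        Fρe ρ v p ρ v p = (p / (γ - 1) + ρ * v ^ 2 / 2 + p) * v) ∧
      -- (ii) entropy conservation `⟦w⟧ ⬝ F - ⟦ψ⟧ = 0` for all pairs of states
      (∀ ρm vm pm ρp vp pp : ℝ, 0 < ρm → 0 < pm → 0 < ρp → 0 < pp →
        ecResidual γ α ρm vm pm ρp vp pp
          (Fρ ρm vm pm ρp vp pp) (Fρv ρm vm pm ρp vp pp) (Fρe ρm vm pm ρp vp pp) = 0) ∧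
      -- (iii) pressure equilibrium preservation
      (∃ c₁ c₂ : ℝ → ℝ → ℝ, ∀ ρm ρp v p : ℝ, 0 < ρm → 0 < ρp → 0 < p →
        Fρv ρm v p ρp v p = v * Fρ ρm v p ρp v p + c₁ p v ∧
        Fρe ρm v p ρp v p = 1 / 2 * v ^ 2 * Fρ ρm v p ρp v p + c₂ p v) ∧
      -- (iv) the density flux does not depend on the pressures
      (∀ ρm vm pm ρp vp pp qm qp : ℝ,
        0 < ρm → 0 < ρp → 0 < pm → 0 < pp → 0 < qm → 0 < qp →
        Fρ ρm vm pm ρp vp pp = Fρ ρm vm qm ρp vp qp) := by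
  rintro ⟨Fρ, Fρv, Fρe, α, hα, hcons, hec, hpep, hind⟩
  have hαγ : α + γ ≠ 0 := by rcases hα with hα | hα <;> [positivity; linarith]
  have hαγ₁ : α + γ - 1 ≠ 0 := by rcases hα with hα | hα <;> nlinarith
  have key := fun x (hx : 0 < x) =>
    IsEntropyConservative.power_identity hec hcons hpep hind hγ.ne' hαγ hαγ₁ hx
  rcases hα with hα | hα
  · have hb : 1 - γ / (α + γ) = α / (α + γ) := by field_simp; ring
    have hm : α / (α + γ) < α / (α + γ - 1) := div_lt_div_of_pos_left hα (by linarith) (by linarith)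
    exact not_power_identity_of_pos hγ.ne' (div_pos hα (by linarith))
      ((div_lt_one (by linarith)).2 (by linarith)) (by linarith) key
  · exact not_power_identity_of_neg (div_neg_of_pos_of_neg (by linarith) (by linarith))
      ((one_lt_div_of_neg (by linarith)).2 (by linarith)) key
end

section
/- Let γ > 1 and let α satisfy α > 0 or α < −γ. Fix p > 0, v ∈ ℝ, and two densities ρ₋, ρ₊ > 0 with ρ₋ ≠ ρ₊, and consider the pair of states (ρ₋, v, p), (ρ₊, v, p) (constant velocity and pressure). Suppose F = (Fρ, Fρv, Fρe) ∈ ℝ³ satisfies the pressure-equilibrium-preserving form Fρv = v·Fρ + p and Fρe = (1/2)v²·Fρ + (γ/(γ−1))·p·v, and is entropy conservative for Harten's entropy with parameter α, i.e. ⟦w⟧·F − ⟦ψ⟧ = 0 at this pair of states. Then the density component is given by Fρ = −(γ/α) · (⟦ρ^{α/(α+γ)}⟧ / ⟦ρ^{−γ/(α+γ)}⟧) · v, where ⟦ρ^s⟧ = ρ₊^s − ρ₋^s. -/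
theorem rpow_ne_rpow_of_ne {x a b : ℝ} (hx : x ≠ 0) (ha : 0 ≤ a) (hb : 0 ≤ b) (hab : a ≠ b) :
    a ^ x ≠ b ^ x :=
  fun h => hab (Real.rpow_left_injOn hx ha hb h)

theorem div_rpow_rpow_eq_mul_rpow (p ρ γ t : ℝ) (hp : 0 ≤ p) (hρ : 0 ≤ ρ) :
    (p / ρ ^ γ) ^ t = p ^ t * ρ ^ (-(γ * t)) := by
  rw [Real.div_rpow hp (Real.rpow_nonneg hρ γ), ← Real.rpow_mul hρ, Real.rpow_neg hρ,
    div_eq_mul_inv]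

theorem eq_neg_div_mul_of_mul_add_mul_eq_zero {α γ a b F v : ℝ} (hα : α ≠ 0) (ha : a ≠ 0)
    (h : α * a * F + γ * b * v = 0) : F = -(γ / α) * (b / a) * v := by
  field_simp
  linear_combination h

theorem ecResidual_const_pressure_velocity_eq {γ α p v ρm ρp Fρ : ℝ} (hγ : γ ≠ 1) (hαγ : α + γ ≠ 0)
    (hp : 0 < p) (hρm : 0 < ρm) (hρp : 0 < ρp) :
    ecResidual γ α ρm v p ρp v p Fρ (v * Fρ + p) (1 / 2 * v ^ 2 * Fρ + γ / (γ - 1) * p * v) =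
      -(p ^ (1 / (α + γ)) / (γ - 1)) *
        (α * (ρp ^ (-γ / (α + γ)) - ρm ^ (-γ / (α + γ))) * Fρ
          + γ * (ρp ^ (α / (α + γ)) - ρm ^ (α / (α + γ))) * v) := by
  have hexp : -(γ * (1 / (α + γ))) = -γ / (α + γ) := by ring
  have hone : α / (α + γ) = 1 + -γ / (α + γ) := by field_simp; ring
  have hγ1 : γ - 1 ≠ 0 := sub_ne_zero.2 hγ
  unfold ecResidual hartenW1 hartenW2 hartenW3 hartenPsi
  simp only [div_rpow_rpow_eq_mul_rpow p _ γ _ hp.le hρm.le,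
    div_rpow_rpow_eq_mul_rpow p _ γ _ hp.le hρp.le, hexp, hone,
    Real.rpow_add hρm, Real.rpow_add hρp, Real.rpow_one]
  field_simp
  ring

/-- **Lemma 2.1 of the paper.** For constant pressure and velocity, a numerical
flux of pressure-equilibrium-preserving form that is entropy conservative for
Harten's entropy with parameter `α` has density flux
`Fρ = -(γ/α) ⟦ρ^(α/(α+γ))⟧ / ⟦ρ^(-γ/(α+γ))⟧ ⋅ v`. -/
theorem density_flux_constant_pressure_velocity
    (γ α p v ρm ρp Fρ Fρv Fρe : ℝ)
    (hγ : 1 < γ) (hα : 0 < α ∨ α < -γ)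
    (hp : 0 < p) (hρm : 0 < ρm) (hρp : 0 < ρp) (hρ : ρm ≠ ρp)
    (hFρv : Fρv = v * Fρ + p)
    (hFρe : Fρe = 1 / 2 * v ^ 2 * Fρ + γ / (γ - 1) * p * v)
    (hec : ecResidual γ α ρm v p ρp v p Fρ Fρv Fρe = 0) :
    Fρ = -(γ / α) *
      ((ρp ^ (α / (α + γ)) - ρm ^ (α / (α + γ))) /
        (ρp ^ (-γ / (α + γ)) - ρm ^ (-γ / (α + γ)))) * v := by
  have hγ0 : 0 < γ := by linarith
  have hα0 : α ≠ 0 := by rcases hα with h | h <;> linarith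
  have hαγ : α + γ ≠ 0 := by rcases hα with h | h <;> linarith
  have hjump : ρp ^ (-γ / (α + γ)) - ρm ^ (-γ / (α + γ)) ≠ 0 :=
    sub_ne_zero.2
      (rpow_ne_rpow_of_ne (div_ne_zero (neg_ne_zero.2 hγ0.ne') hαγ) hρm.le hρp.le hρ).symm
  rw [hFρv, hFρe, ecResidual_const_pressure_velocity_eq hγ.ne' hαγ hp hρm hρp] at hec
  have hpre : -(p ^ (1 / (α + γ)) / (γ - 1)) ≠ 0 :=
    neg_ne_zero.2 (div_pos (Real.rpow_pos_of_pos hp _) (sub_pos.2 hγ)).ne'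
  have hbal := (mul_eq_zero.1 hec).resolve_left hpre
  exact eq_neg_div_mul_of_mul_add_mul_eq_zero hα0 hjump hbal
end

section
/- Let γ > 1 and let α satisfy α > 0 or α < −γ. Fix v ∈ ℝ, densities ρ₋, ρ₊ > 0 with ρ₋ ≠ ρ₊, a pressure p₊ > 0, and set p₋ = p₊ · (ρ₋/ρ₊)^{α/(α+γ−1)}. If F = (Fρ, Fρv, Fρe) ∈ ℝ³ is entropy conservative for Harten's entropy with parameter α at the pair of states (ρ₋, v, p₋), (ρ₊, v, p₊), i.e. ⟦w⟧·F − ⟦ψ⟧ = 0, then the density component is given by Fρ = −((γ−1)/α) · (⟦ρ^{α/(α+γ−1)}⟧ / ⟦ρ^{(1−γ)/(α+γ−1)}⟧) · v, where ⟦ρ^s⟧ = ρ₊^s − ρ₋^s. -/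
/-!
Along the curve `p = C ρ^E` with `E = α/(α+γ-1)`, the entropy-variable prefactor
`(ρ/p)(p/ρ^γ)^(1/(α+γ))` is the constant `C^(1/(α+γ)-1)`. For a constant velocity the jumps of
the second and third entropy variables therefore vanish, and the entropy conservation condition
collapses to one linear equation `(α/(γ-1)) ⟦ρ^k⟧ Fρ + ⟦ρ^E⟧ v = 0` with `k = E - 1`.
-/

open Real

section PowerLaw

variable {γ α C ρ : ℝ}

lemma powerLaw_exponent_sub_one (haγ1 : α + γ - 1 ≠ 0) :
    α / (α + γ - 1) - 1 = (1 - γ) / (α + γ - 1) := by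
  field_simp
  ring

lemma powerLaw_pressure_div_density (hρ : 0 < ρ) (haγ1 : α + γ - 1 ≠ 0) :
    C * ρ ^ (α / (α + γ - 1)) / ρ = C * ρ ^ ((1 - γ) / (α + γ - 1)) := by
  rw [mul_div_assoc, ← rpow_sub_one hρ.ne', powerLaw_exponent_sub_one haγ1]

lemma powerLaw_entropy_scale (hρ : 0 < ρ) (hC : 0 < C) (haγ : α + γ ≠ 0)
    (haγ1 : α + γ - 1 ≠ 0) :
    (C * ρ ^ (α / (α + γ - 1)) / ρ ^ γ) ^ (1 / (α + γ)) =
      C ^ (1 / (α + γ)) * ρ ^ ((1 - γ) / (α + γ - 1)) := by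
  have hexp : (α / (α + γ - 1) - γ) * (1 / (α + γ)) = (1 - γ) / (α + γ - 1) := by
    field_simp
    ring
  rw [mul_div_assoc, ← rpow_sub hρ, mul_rpow hC.le (rpow_nonneg hρ.le _),
    ← rpow_mul hρ.le, hexp]

lemma powerLaw_entropy_prefactor (hρ : 0 < ρ) (hC : 0 < C) (haγ : α + γ ≠ 0)
    (haγ1 : α + γ - 1 ≠ 0) :
    ρ / (C * ρ ^ (α / (α + γ - 1))) * (C * ρ ^ (α / (α + γ - 1)) / ρ ^ γ) ^ (1 / (α + γ)) =
      C ^ (1 / (α + γ) - 1) := by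
  have hρE : ρ ^ (α / (α + γ - 1)) ≠ 0 := (rpow_pos_of_pos hρ _).ne'
  rw [powerLaw_entropy_scale hρ hC haγ haγ1, ← powerLaw_exponent_sub_one haγ1,
    rpow_sub_one hρ.ne', rpow_sub_one hC.ne']
  field_simp

lemma powerLaw_flux_scale (hρ : 0 < ρ) (hC : 0 < C) (haγ : α + γ ≠ 0)
    (haγ1 : α + γ - 1 ≠ 0) :
    ρ * (C * ρ ^ (α / (α + γ - 1)) / ρ ^ γ) ^ (1 / (α + γ)) =
      C ^ (1 / (α + γ)) * ρ ^ (α / (α + γ - 1)) := by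
  rw [powerLaw_entropy_scale hρ hC haγ haγ1, ← powerLaw_exponent_sub_one haγ1,
    rpow_sub_one hρ.ne']
  field_simp

end PowerLaw

lemma ecResidual_powerLaw {γ α C ρm ρp : ℝ} (v Fρ Fρv Fρe : ℝ) (hρm : 0 < ρm) (hρp : 0 < ρp)
    (hC : 0 < C) (haγ : α + γ ≠ 0) (haγ1 : α + γ - 1 ≠ 0) :
    ecResidual γ α ρm v (C * ρm ^ (α / (α + γ - 1))) ρp v (C * ρp ^ (α / (α + γ - 1)))
        Fρ Fρv Fρe =
      -C ^ (1 / (α + γ)) * (α / (γ - 1) *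
        (ρp ^ ((1 - γ) / (α + γ - 1)) - ρm ^ ((1 - γ) / (α + γ - 1))) * Fρ +
          (ρp ^ (α / (α + γ - 1)) - ρm ^ (α / (α + γ - 1))) * v) := by
  simp only [ecResidual, hartenW1, hartenW2, hartenW3, hartenPsi]
  rw [powerLaw_entropy_prefactor hρm hC haγ haγ1, powerLaw_entropy_prefactor hρp hC haγ haγ1,
    powerLaw_flux_scale hρm hC haγ haγ1, powerLaw_flux_scale hρp hC haγ haγ1,
    powerLaw_pressure_div_density hρm haγ1, powerLaw_pressure_div_density hρp haγ1,
    rpow_sub_one hC.ne']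
  field_simp
  ring

lemma rpow_sub_rpow_ne_zero {x y k : ℝ} (hx : 0 < x) (hy : 0 < y) (hxy : x ≠ y) (hk : k ≠ 0) :
    y ^ k - x ^ k ≠ 0 :=
  sub_ne_zero.2 fun h => hxy (rpow_left_injOn hk hx.le hy.le h.symm)

/-- **Lemma 2.2 of the paper.** For constant velocity and pressures related by
`p₋ = p₊ (ρ₋/ρ₊)^(α/(α+γ-1))`, a numerical flux that is entropy conservative
for Harten's entropy with parameter `α` has density flux
`Fρ = -((γ-1)/α) ⟦ρ^(α/(α+γ-1))⟧ / ⟦ρ^((1-γ)/(α+γ-1))⟧ ⋅ v`. -/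
theorem density_flux_special_pressure
    (γ α v ρm ρp pp pm Fρ Fρv Fρe : ℝ)
    (hγ : 1 < γ) (hα : 0 < α ∨ α < -γ)
    (hρm : 0 < ρm) (hρp : 0 < ρp) (hρ : ρm ≠ ρp) (hpp : 0 < pp)
    (hpm : pm = pp * (ρm / ρp) ^ (α / (α + γ - 1)))
    (hec : ecResidual γ α ρm v pm ρp v pp Fρ Fρv Fρe = 0) :
    Fρ = -((γ - 1) / α) *
      ((ρp ^ (α / (α + γ - 1)) - ρm ^ (α / (α + γ - 1))) /
        (ρp ^ ((1 - γ) / (α + γ - 1)) - ρm ^ ((1 - γ) / (α + γ - 1)))) * v := by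
  have hγ1 : γ - 1 ≠ 0 := sub_ne_zero.2 hγ.ne'
  have hα0 : α ≠ 0 := by rcases hα with h | h <;> linarith
  have haγ : α + γ ≠ 0 := by rcases hα with h | h <;> linarith
  have haγ1 : α + γ - 1 ≠ 0 := by rcases hα with h | h <;> linarith
  set E := α / (α + γ - 1)
  set k := (1 - γ) / (α + γ - 1)
  -- both states lie on the curve `p = C ρ^E` through `(ρp, pp)`
  set C := pp / ρp ^ E
  have hC : 0 < C := div_pos hpp (rpow_pos_of_pos hρp _)
  have hpp' : pp = C * ρp ^ E := (div_mul_cancel₀ pp (rpow_pos_of_pos hρp _).ne').symm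
  have hpm' : pm = C * ρm ^ E := by
    rw [hpm, div_rpow hρm.le hρp.le]
    ring
  rw [hpm', hpp', ecResidual_powerLaw v Fρ Fρv Fρe hρm hρp hC haγ haγ1] at hec
  have hlin : α / (γ - 1) * (ρp ^ k - ρm ^ k) * Fρ + (ρp ^ E - ρm ^ E) * v = 0 :=
    (mul_eq_zero.1 hec).resolve_left (neg_ne_zero.2 (rpow_pos_of_pos hC _).ne')
  have hjump : ρp ^ k - ρm ^ k ≠ 0 :=
    rpow_sub_rpow_ne_zero hρm hρp hρ (div_ne_zero (sub_ne_zero.2 hγ.ne) haγ1)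
  field_simp at hlin ⊢
  linear_combination hlin
end

section
/- Let γ > 1 and let α satisfy α > 0 or α < −γ. Fix p > 0, v ∈ ℝ, and ρ₋, ρ₊ > 0, and consider the pair of states (ρ₋, v, p), (ρ₊, v, p). For any F = (Fρ, Fρv, Fρe) ∈ ℝ³ with Fρv = v·Fρ + p and Fρe = (1/2)v²·Fρ + (γ/(γ−1))·p·v, the entropy conservation residual satisfies the identity ⟦w⟧·F − ⟦ψ⟧ = −(α/(γ−1)) · p^{1/(α+γ)} · ⟦ρ^{−γ/(α+γ)}⟧ · Fρ − (γ/(γ−1)) · p^{1/(α+γ)} · v · ⟦ρ^{α/(α+γ)}⟧, where ⟦ρ^s⟧ = ρ₊^s − ρ₋^s. -/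
/-!
Since `⟦w⟧ ⬝ F - ⟦ψ⟧` is the jump of the one-state quantity `w ⬝ F - ψ`, it suffices to evaluate
the latter. For a flux of the given form the kinetic-energy terms cancel, leaving
`-(α/(γ-1)) f Fρ - γ/(γ-1) ρ f v` with `f = (p/ρ^γ)^(1/(α+γ)) = p^(1/(α+γ)) ρ^(-γ/(α+γ))`,
and `ρ f = p^(1/(α+γ)) ρ^(α/(α+γ))`.
-/

theorem Real.div_rpow_rpow_eq {p ρ : ℝ} (hp : 0 ≤ p) (hρ : 0 ≤ ρ) (γ s : ℝ) :
    (p / ρ ^ γ) ^ s = p ^ s * ρ ^ (-(γ * s)) := by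
  rw [Real.div_rpow hp (Real.rpow_nonneg hρ γ), ← Real.rpow_mul hρ, Real.rpow_neg hρ,
    div_eq_mul_inv]

noncomputable def hartenFluxPairing (γ α ρ v p Fρ Fρv Fρe : ℝ) : ℝ :=
  hartenW1 γ α ρ v p * Fρ + hartenW2 γ α ρ v p * Fρv + hartenW3 γ α ρ v p * Fρe
    - hartenPsi γ α ρ v p

theorem ecResidual_eq_sub_hartenFluxPairing (γ α ρm vm pm ρp vp pp Fρ Fρv Fρe : ℝ) :
    ecResidual γ α ρm vm pm ρp vp pp Fρ Fρv Fρe =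
      hartenFluxPairing γ α ρp vp pp Fρ Fρv Fρe - hartenFluxPairing γ α ρm vm pm Fρ Fρv Fρe := by
  unfold ecResidual hartenFluxPairing
  ring

theorem hartenFluxPairing_of_pressure_equilibrium {γ α ρ v p Fρ Fρv Fρe : ℝ}
    (hρ : ρ ≠ 0) (hp : p ≠ 0) (hFρv : Fρv = v * Fρ + p)
    (hFρe : Fρe = 1 / 2 * v ^ 2 * Fρ + γ / (γ - 1) * p * v) :
    hartenFluxPairing γ α ρ v p Fρ Fρv Fρe =
      -(α / (γ - 1)) * (p / ρ ^ γ) ^ (1 / (α + γ)) * Fρ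
        - γ / (γ - 1) * ρ * (p / ρ ^ γ) ^ (1 / (α + γ)) * v := by
  unfold hartenFluxPairing hartenW1 hartenW2 hartenW3 hartenPsi
  subst hFρv hFρe
  field_simp
  ring

/-- For a pair of states with common pressure `p` and velocity `v`, and any
flux of pressure-equilibrium-preserving form `Fρv = v Fρ + p`,
`Fρe = ½ v² Fρ + γ/(γ-1) p v`, the entropy conservation residual satisfies
`⟦w⟧ ⬝ F - ⟦ψ⟧ = -(α/(γ-1)) p^(1/(α+γ)) ⟦ρ^(-γ/(α+γ))⟧ Fρ
  - (γ/(γ-1)) p^(1/(α+γ)) v ⟦ρ^(α/(α+γ))⟧`. -/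
theorem ec_residual_constant_pressure_velocity
    (γ α p v ρm ρp Fρ Fρv Fρe : ℝ)
    (hγ : 1 < γ) (hα : 0 < α ∨ α < -γ)
    (hp : 0 < p) (hρm : 0 < ρm) (hρp : 0 < ρp)
    (hFρv : Fρv = v * Fρ + p)
    (hFρe : Fρe = 1 / 2 * v ^ 2 * Fρ + γ / (γ - 1) * p * v) :
    ecResidual γ α ρm v p ρp v p Fρ Fρv Fρe =
      -(α / (γ - 1)) * p ^ (1 / (α + γ)) *
          (ρp ^ (-γ / (α + γ)) - ρm ^ (-γ / (α + γ))) * Fρ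
        - γ / (γ - 1) * p ^ (1 / (α + γ)) * v *
          (ρp ^ (α / (α + γ)) - ρm ^ (α / (α + γ))) := by
  have hαγ : α + γ ≠ 0 := by rcases hα with h | h <;> linarith
  have factor : ∀ ρ : ℝ, 0 < ρ →
      (p / ρ ^ γ) ^ (1 / (α + γ)) = p ^ (1 / (α + γ)) * ρ ^ (-γ / (α + γ)) := fun ρ hρ => by
    rw [Real.div_rpow_rpow_eq hp.le hρ.le, mul_one_div, neg_div]
  have density : ∀ ρ : ℝ, 0 < ρ → ρ * ρ ^ (-γ / (α + γ)) = ρ ^ (α / (α + γ)) := fun ρ hρ => by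
    rw [mul_comm, ← Real.rpow_add_one hρ.ne']
    congr 1
    field_simp
    ring
  rw [ecResidual_eq_sub_hartenFluxPairing,
    hartenFluxPairing_of_pressure_equilibrium hρp.ne' hp.ne' hFρv hFρe,
    hartenFluxPairing_of_pressure_equilibrium hρm.ne' hp.ne' hFρv hFρe,
    factor ρp hρp, factor ρm hρm, ← density ρp hρp, ← density ρm hρm]
  ring
end

section
/- Let γ > 1 and let α satisfy α > 0 or α < −γ. Fix v ∈ ℝ, densities ρ₋, ρ₊ > 0 with ρ₋ ≠ ρ₊, a pressure p₊ > 0, and set p₋ = p₊ · (ρ₋/ρ₊)^{α/(α+γ−1)}. If F = (Fρ, Fρv, Fρe) ∈ ℝ³ is entropy conservative for Harten's entropy with parameter α at the pair of states (ρ₋, v, p₋), (ρ₊, v, p₊), i.e. ⟦w⟧·F − ⟦ψ⟧ = 0, then Fρ = −((γ−1)/α) · (⟦ρ (p/ρ^γ)^{1/(α+γ)}⟧ / ⟦(p/ρ^γ)^{1/(α+γ)}⟧) · v, where the jumps in numerator and denominator are evaluated at the two given states and the denominator is nonzero. -/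
/-!
Write `s = (p/ρ^γ)^(1/(α+γ))` and `q = (ρ/p) s`, so that `w = (-(α/(γ-1)) s - q v²/2, q v, -q)`
and `ψ = ρ s v`. At equal velocities `⟦w⟧ ⬝ F - ⟦ψ⟧` is therefore
`-(α/(γ-1)) ⟦s⟧ Fρ + ⟦q⟧ (v Fρv - v²/2 Fρ - Fρe) - ⟦ρ s⟧ v`. Along the power law
`p = K ρ^(α/(α+γ-1))`, through which the two given states pass, `q = K^(1/(α+γ)) / K` is
constant and `s = K^(1/(α+γ)) ρ^((1-γ)/(α+γ-1))` is injective in `ρ`, so the entropy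
conservation condition collapses to `-(α/(γ-1)) ⟦s⟧ Fρ = ⟦ρ s⟧ v` with `⟦s⟧ ≠ 0`.
-/

noncomputable def hartenEntropyFactor (γ α ρ p : ℝ) : ℝ :=
  (p / ρ ^ γ) ^ (1 / (α + γ))

noncomputable def hartenWScale (γ α ρ p : ℝ) : ℝ :=
  ρ / p * hartenEntropyFactor γ α ρ p

theorem ecResidual_same_velocity (γ α v ρm pm ρp pp Fρ Fρv Fρe : ℝ)
    (hρm : ρm ≠ 0) (hpm : pm ≠ 0) (hρp : ρp ≠ 0) (hpp : pp ≠ 0) :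
    ecResidual γ α ρm v pm ρp v pp Fρ Fρv Fρe =
      -(α / (γ - 1)) * (hartenEntropyFactor γ α ρp pp - hartenEntropyFactor γ α ρm pm) * Fρ
        + (hartenWScale γ α ρp pp - hartenWScale γ α ρm pm) * (v * Fρv - v ^ 2 / 2 * Fρ - Fρe)
        - (ρp * hartenEntropyFactor γ α ρp pp - ρm * hartenEntropyFactor γ α ρm pm) * v := by
  simp only [ecResidual, hartenW1, hartenW2, hartenW3, hartenPsi, hartenWScale,
    hartenEntropyFactor]
  field_simp
  ring

theorem density_flux_eq_of_ecResidual_eq_zero {γ α v ρm pm ρp pp Fρ Fρv Fρe : ℝ}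
    (hγ : γ ≠ 1) (hα : α ≠ 0) (hρm : ρm ≠ 0) (hpm : pm ≠ 0) (hρp : ρp ≠ 0) (hpp : pp ≠ 0)
    (hscale : hartenWScale γ α ρm pm = hartenWScale γ α ρp pp)
    (hjump : hartenEntropyFactor γ α ρp pp - hartenEntropyFactor γ α ρm pm ≠ 0)
    (hec : ecResidual γ α ρm v pm ρp v pp Fρ Fρv Fρe = 0) :
    Fρ = -((γ - 1) / α) *
      ((ρp * hartenEntropyFactor γ α ρp pp - ρm * hartenEntropyFactor γ α ρm pm) /
        (hartenEntropyFactor γ α ρp pp - hartenEntropyFactor γ α ρm pm)) * v := by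
  rw [ecResidual_same_velocity γ α v ρm pm ρp pp Fρ Fρv Fρe hρm hpm hρp hpp, hscale, sub_self,
    zero_mul, add_zero] at hec
  have hγ1 : γ - 1 ≠ 0 := sub_ne_zero.2 hγ
  field_simp at hec ⊢
  linear_combination -hec

section PowerLaw

variable {γ α ρ K : ℝ}

theorem hartenEntropyFactor_power_law (hρ : 0 < ρ) (hK : 0 < K)
    (hA : α + γ ≠ 0) (hB : α + γ - 1 ≠ 0) :
    hartenEntropyFactor γ α ρ (K * ρ ^ (α / (α + γ - 1))) =
      K ^ (1 / (α + γ)) * ρ ^ ((1 - γ) / (α + γ - 1)) := by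
  have hexp : (α / (α + γ - 1) - γ) * (1 / (α + γ)) = (1 - γ) / (α + γ - 1) := by
    field_simp
    ring
  rw [hartenEntropyFactor, mul_div_assoc, ← Real.rpow_sub hρ,
    Real.mul_rpow hK.le (by positivity), ← Real.rpow_mul hρ.le, hexp]

theorem hartenWScale_power_law (hρ : 0 < ρ) (hK : 0 < K)
    (hA : α + γ ≠ 0) (hB : α + γ - 1 ≠ 0) :
    hartenWScale γ α ρ (K * ρ ^ (α / (α + γ - 1))) = K ^ (1 / (α + γ)) / K := by
  have hρpow : ρ * ρ ^ ((1 - γ) / (α + γ - 1)) = ρ ^ (α / (α + γ - 1)) := by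
    rw [show α / (α + γ - 1) = 1 + (1 - γ) / (α + γ - 1) by field_simp; ring,
      Real.rpow_add hρ, Real.rpow_one]
  rw [hartenWScale, hartenEntropyFactor_power_law hρ hK hA hB, ← hρpow]
  field_simp

theorem hartenEntropyFactor_power_law_ne {ρ' : ℝ} (hγ : γ ≠ 1) (hρ : 0 < ρ) (hρ' : 0 < ρ')
    (hρρ' : ρ ≠ ρ') (hK : 0 < K) (hA : α + γ ≠ 0) (hB : α + γ - 1 ≠ 0) :
    hartenEntropyFactor γ α ρ (K * ρ ^ (α / (α + γ - 1))) ≠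
      hartenEntropyFactor γ α ρ' (K * ρ' ^ (α / (α + γ - 1))) := by
  have hexp : (1 - γ) / (α + γ - 1) ≠ 0 := div_ne_zero (sub_ne_zero.2 (Ne.symm hγ)) hB
  rw [hartenEntropyFactor_power_law hρ hK hA hB, hartenEntropyFactor_power_law hρ' hK hA hB,
    Ne, mul_right_inj' (by positivity)]
  exact fun h => hρρ' (Real.rpow_left_injOn hexp hρ.le hρ'.le h)

end PowerLaw

/-- For constant velocity and pressures related by
`p₋ = p₊ (ρ₋/ρ₊)^(α/(α+γ-1))`, an entropy-conservative numerical flux for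
Harten's entropy with parameter `α` has density flux
`Fρ = -((γ-1)/α) ⟦ρ (p/ρ^γ)^(1/(α+γ))⟧ / ⟦(p/ρ^γ)^(1/(α+γ))⟧ ⋅ v`,
the denominator being nonzero. -/
theorem density_flux_special_pressure_jump_form
    (γ α v ρm ρp pp pm Fρ Fρv Fρe : ℝ)
    (hγ : 1 < γ) (hα : 0 < α ∨ α < -γ)
    (hρm : 0 < ρm) (hρp : 0 < ρp) (hρ : ρm ≠ ρp) (hpp : 0 < pp)
    (hpm : pm = pp * (ρm / ρp) ^ (α / (α + γ - 1)))
    (hec : ecResidual γ α ρm v pm ρp v pp Fρ Fρv Fρe = 0) :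
    (pp / ρp ^ γ) ^ (1 / (α + γ)) - (pm / ρm ^ γ) ^ (1 / (α + γ)) ≠ 0 ∧
    Fρ = -((γ - 1) / α) *
      ((ρp * (pp / ρp ^ γ) ^ (1 / (α + γ)) - ρm * (pm / ρm ^ γ) ^ (1 / (α + γ))) /
        ((pp / ρp ^ γ) ^ (1 / (α + γ)) - (pm / ρm ^ γ) ^ (1 / (α + γ)))) * v := by
  have hγ1 : γ ≠ 1 := hγ.ne'
  have hα0 : α ≠ 0 := by rcases hα with h | h <;> [exact h.ne'; linarith]
  have hA : α + γ ≠ 0 := by rcases hα with h | h <;> linarith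
  have hB : α + γ - 1 ≠ 0 := by rcases hα with h | h <;> linarith
  obtain ⟨K, hK, rfl⟩ : ∃ K, 0 < K ∧ pp = K * ρp ^ (α / (α + γ - 1)) :=
    ⟨pp / ρp ^ (α / (α + γ - 1)), by positivity, by field_simp⟩
  obtain rfl : pm = K * ρm ^ (α / (α + γ - 1)) := by
    rw [hpm, Real.div_rpow hρm.le hρp.le]
    field_simp
  have hjump := sub_ne_zero.2 (hartenEntropyFactor_power_law_ne hγ1 hρp hρm hρ.symm hK hA hB)
  have hscale := (hartenWScale_power_law hρm hK hA hB).trans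
    (hartenWScale_power_law hρp hK hA hB).symm
  exact ⟨hjump, density_flux_eq_of_ecResidual_eq_zero hγ1 hα0 hρm.ne' (by positivity) hρp.ne'
    (by positivity) hscale hjump hec⟩
end

section
/- Let γ > 1 and let α satisfy α > 0 or α < −γ. Then there exist densities ρ₋, ρ₊ > 0 with ρ₋ ≠ ρ₊ such that γ · (ρ₊^{α/(α+γ)} − ρ₋^{α/(α+γ)}) / (ρ₊^{−γ/(α+γ)} − ρ₋^{−γ/(α+γ)}) ≠ (γ−1) · (ρ₊^{α/(α+γ−1)} − ρ₋^{α/(α+γ−1)}) / (ρ₊^{(1−γ)/(α+γ−1)} − ρ₋^{(1−γ)/(α+γ−1)}). -/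
/-!
Take `ρ₋ = 1` and `ρ₊ = x`. With `a = α/(α+γ)` and `b = α/(α+γ-1)` the two exponents in each
denominator are `a - 1` and `b - 1`, so the claimed identity for all `x > 1` would read
`γ R_a(x) = (γ-1) R_b(x)` with `R_c(x) = (x^c - 1)/(x^(c-1) - 1)`. As `x → ∞`,
`R_c(x) ~ -x^c` for `0 < c < 1` and `R_c(x) ~ x` for `c > 1`. If `α > 0` then `0 < a < b < 1`,
so the two sides grow at different rates; if `α < -γ` then `a, b > 1` and the two sides grow
like `γ x` and `(γ-1) x`. Either way they cannot agree for all large `x`.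
-/

open Filter Topology Real

theorem not_eventually_mul_eq_of_tendsto_mul {ι R : Type*} [CommSemiring R] [TopologicalSpace R]
    [ContinuousMul R] [T2Space R] {l : Filter ι} [l.NeBot] {f g h : ι → R} {p q L M : R}
    (hf : Tendsto (fun x => f x * h x) l (𝓝 L)) (hg : Tendsto (fun x => g x * h x) l (𝓝 M))
    (hne : p * L ≠ q * M) : ¬∀ᶠ x in l, p * f x = q * g x := by
  intro hfg
  refine hne (tendsto_nhds_unique ((hf.const_mul p).congr' ?_) (hg.const_mul q))
  filter_upwards [hfg] with x hx
  rw [← mul_assoc, hx, mul_assoc]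

/-- The ratio of jumps `⟦ρ^c⟧ / ⟦ρ^(c-1)⟧` between the densities `1` and `x`. -/
noncomputable def jumpRatio (c x : ℝ) : ℝ := (x ^ c - 1) / (x ^ (c - 1) - 1)

theorem tendsto_jumpRatio_mul_rpow_neg_atTop {c : ℝ} (hc₀ : 0 < c) (hc₁ : c < 1) :
    Tendsto (fun x => jumpRatio c x * x ^ (-c)) atTop (𝓝 (-1)) := by
  have hpow : Tendsto (fun x : ℝ => x ^ (c - 1)) atTop (𝓝 0) := by
    simpa using tendsto_rpow_neg_atTop (sub_pos.2 hc₁)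
  have hlim : Tendsto (fun x : ℝ => (1 - x ^ (-c)) / (x ^ (c - 1) - 1)) atTop
      (𝓝 ((1 - 0) / (0 - 1))) :=
    (tendsto_const_nhds.sub (tendsto_rpow_neg_atTop hc₀)).div
      (hpow.sub tendsto_const_nhds) (by norm_num)
  rw [sub_zero, zero_sub, div_neg, div_one] at hlim
  refine hlim.congr' ?_
  filter_upwards [eventually_gt_atTop 0] with x hx
  rw [jumpRatio, div_mul_eq_mul_div, sub_mul, ← rpow_add hx, add_neg_cancel, rpow_zero, one_mul]

theorem tendsto_jumpRatio_mul_rpow_neg_atTop_of_lt {a b : ℝ} (ha : 0 < a) (hab : a < b)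
    (hb : b < 1) : Tendsto (fun x => jumpRatio a x * x ^ (-b)) atTop (𝓝 0) := by
  have hlim := (tendsto_jumpRatio_mul_rpow_neg_atTop ha (hab.trans hb)).mul
    (tendsto_rpow_neg_atTop (sub_pos.2 hab))
  rw [mul_zero] at hlim
  refine hlim.congr' ?_
  filter_upwards [eventually_gt_atTop 0] with x hx
  rw [mul_assoc, ← rpow_add hx]
  ring_nf

theorem tendsto_jumpRatio_mul_inv_atTop {c : ℝ} (hc : 1 < c) :
    Tendsto (fun x => jumpRatio c x * x⁻¹) atTop (𝓝 1) := by
  have hpow : Tendsto (fun x : ℝ => x ^ (1 - c)) atTop (𝓝 0) := by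
    simpa using tendsto_rpow_neg_atTop (sub_pos.2 hc)
  have hlim : Tendsto (fun x : ℝ => (1 - x ^ (-c)) / (1 - x ^ (1 - c))) atTop
      (𝓝 ((1 - 0) / (1 - 0))) :=
    (tendsto_const_nhds.sub (tendsto_rpow_neg_atTop (one_pos.trans hc))).div
      (tendsto_const_nhds.sub hpow) (by norm_num)
  rw [sub_zero, div_one] at hlim
  refine hlim.congr' ?_
  filter_upwards [eventually_gt_atTop 0] with x hx
  have hxc : x ^ c ≠ 0 := (rpow_pos_of_pos hx c).ne'
  rw [jumpRatio, rpow_neg hx.le, rpow_sub hx, rpow_sub_one hx.ne', rpow_one]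
  field_simp

/-- For every `γ > 1` and every `α` with `α > 0` or `α < -γ`, there exist
positive densities `ρ₋ ≠ ρ₊` at which the two density flux values forced by
entropy conservation (at constant pressure and velocity, and along the curve
`p₋ = p₊ (ρ₋/ρ₊)^(α/(α+γ-1))` at constant velocity, respectively) differ:
`γ ⟦ρ^(α/(α+γ))⟧ / ⟦ρ^(-γ/(α+γ))⟧ ≠ (γ-1) ⟦ρ^(α/(α+γ-1))⟧ / ⟦ρ^((1-γ)/(α+γ-1))⟧`. -/
theorem exists_densities_jump_ratios_differ
    (γ α : ℝ) (hγ : 1 < γ) (hα : 0 < α ∨ α < -γ) :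
    ∃ ρm ρp : ℝ, 0 < ρm ∧ 0 < ρp ∧ ρm ≠ ρp ∧
      γ * ((ρp ^ (α / (α + γ)) - ρm ^ (α / (α + γ))) /
            (ρp ^ (-γ / (α + γ)) - ρm ^ (-γ / (α + γ)))) ≠
      (γ - 1) * ((ρp ^ (α / (α + γ - 1)) - ρm ^ (α / (α + γ - 1))) /
            (ρp ^ ((1 - γ) / (α + γ - 1)) - ρm ^ ((1 - γ) / (α + γ - 1)))) := by
  have hne : α + γ ≠ 0 := by rcases hα with h | h <;> intro h' <;> linarith
  have hne₁ : α + γ - 1 ≠ 0 := by rcases hα with h | h <;> intro h' <;> linarith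
  by_contra! H
  have hfg : ∀ᶠ x in atTop,
      γ * jumpRatio (α / (α + γ)) x = (γ - 1) * jumpRatio (α / (α + γ - 1)) x := by
    filter_upwards [eventually_gt_atTop 1] with x hx
    have hexp : -γ / (α + γ) = α / (α + γ) - 1 := by rw [div_sub_one hne]; ring
    have hexp₁ : (1 - γ) / (α + γ - 1) = α / (α + γ - 1) - 1 := by rw [div_sub_one hne₁]; ring
    simpa only [jumpRatio, one_rpow, hexp, hexp₁] using H 1 x one_pos (one_pos.trans hx) hx.ne
  rcases hα with hα | hα
  · exact not_eventually_mul_eq_of_tendsto_mul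
      (tendsto_jumpRatio_mul_rpow_neg_atTop_of_lt (div_pos hα (by linarith))
        (div_lt_div_of_pos_left hα (by linarith) (by linarith))
        ((div_lt_one (by linarith)).2 (by linarith)))
      (tendsto_jumpRatio_mul_rpow_neg_atTop (div_pos hα (by linarith))
        ((div_lt_one (by linarith)).2 (by linarith))) (by intro h; linarith) hfg
  · exact not_eventually_mul_eq_of_tendsto_mul
      (tendsto_jumpRatio_mul_inv_atTop ((one_lt_div_of_neg (by linarith)).2 (by linarith)))
      (tendsto_jumpRatio_mul_inv_atTop ((one_lt_div_of_neg (by linarith)).2 (by linarith)))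
      (by intro h; linarith) hfg
end

section
/- Let γ > 1 and let α satisfy α > 0 or α < −γ. Define, on the open set of conserved variables u = (u₁, u₂, u₃) ∈ ℝ³ with u₁ > 0 and (γ−1)(u₃ − u₂²/(2u₁)) > 0, Harten's entropy U(u) = −((γ+α)/(γ−1)) · u₁ · (p/u₁^γ)^{1/(α+γ)}, where ρ = u₁, v = u₂/u₁, and p = (γ−1)(u₃ − u₂²/(2u₁)). Then U is differentiable at every such u and its gradient equals the entropy variables: U′(u) = (ρ/p)(p/ρ^γ)^{1/(α+γ)} · (−(α/(γ−1))·(p/ρ) − v²/2, v, −1). -/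
/-!
Put `s = 1/(α+γ)`, `c = -(γ+α)/(γ-1)` and `q = (p/ρ^γ)^s`, so that `U = c ρ q`. Logarithmic
differentiation gives `dq = s q (dp/p - γ dρ/ρ)`, hence `d(ρ q) = θ ((1 - γ s)(p/ρ) dρ + s dp)`
with `θ = (ρ/p) q`. The constants collapse to `c (1 - γ s) = -α/(γ-1)` and `c s = -1/(γ-1)`, and
`dp = (γ-1) (v²/2 dρ - v d(ρv) + d(ρe))`, which yields the entropy variables.
-/

open Real

section Calculus

variable {E : Type*} [NormedAddCommGroup E] [NormedSpace ℝ E] {x : E}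

theorem HasFDerivAt.div {f g : E → ℝ} {f' g' : StrongDual ℝ E} (hf : HasFDerivAt f f' x)
    (hg : HasFDerivAt g g' x) (hx : g x ≠ 0) :
    HasFDerivAt (fun y => f y / g y) ((g x ^ 2)⁻¹ • (g x • f' - f x • g')) x := by
  refine (hf.fun_mul ((hasDerivAt_inv hx).comp_hasFDerivAt x hg)).congr_fderiv ?_
  ext y
  simp only [neg_smul, smul_neg, Function.comp_apply, add_apply, neg_apply, smul_apply,
    smul_eq_mul, sub_apply]
  field_simp
  ring

theorem HasFDerivAt.mul_div_rpow_rpow {ρ P : E → ℝ} {ρ' P' : StrongDual ℝ E} (γ s : ℝ)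
    (hρ : HasFDerivAt ρ ρ' x) (hP : HasFDerivAt P P' x) (hρx : 0 < ρ x) (hPx : 0 < P x) :
    HasFDerivAt (fun y => ρ y * (P y / ρ y ^ γ) ^ s)
      ((ρ x / P x * (P x / ρ x ^ γ) ^ s) • (((1 - γ * s) * (P x / ρ x)) • ρ' + s • P')) x := by
  have hργ : 0 < ρ x ^ γ := rpow_pos_of_pos hρx γ
  have hq : 0 < P x / ρ x ^ γ := div_pos hPx hργ
  refine (hρ.fun_mul ((hP.div (hρ.rpow_const (Or.inl hρx.ne')) hργ.ne').rpow_const (p := s)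
    (Or.inl hq.ne'))).congr_fderiv ?_
  ext y
  simp only [add_apply, smul_apply, sub_apply, smul_eq_mul, rpow_sub_one hq.ne',
    rpow_sub_one hρx.ne']
  field_simp
  ring

end Calculus

noncomputable def pressure (γ : ℝ) (x : EuclideanSpace ℝ (Fin 3)) : ℝ :=
  (γ - 1) * (x 2 - x 1 ^ 2 / (2 * x 0))

open EuclideanSpace in
theorem hasFDerivAt_pressure (γ : ℝ) {u : EuclideanSpace ℝ (Fin 3)} (hρ : u 0 ≠ 0) :
    HasFDerivAt (pressure γ)
      ((γ - 1) • (((u 1 / u 0) ^ 2 / 2) • proj 0 - (u 1 / u 0) • proj 1 + proj 2 :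
        StrongDual ℝ (EuclideanSpace ℝ (Fin 3)))) u := by
  have hkinetic := (((proj 1).hasFDerivAt (x := u)).pow 2).div
    (((proj 0).hasFDerivAt (x := u)).const_mul 2) (mul_ne_zero two_ne_zero hρ)
  refine (((proj 2).hasFDerivAt.sub hkinetic).const_mul (γ - 1)).congr_fderiv ?_
  ext y
  simp only [PiLp.proj_apply, Nat.add_one_sub_one, pow_one, nsmul_eq_mul, Nat.cast_ofNat,
    smul_apply, sub_apply, smul_eq_mul, smul_add, add_apply]
  field_simp
  ring

/-- Harten's entropy `U(u) = -((γ+α)/(γ-1)) ρ (p/ρ^γ)^(1/(α+γ))`, viewed as a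
function of the conserved variables `u = (ρ, ρv, ρe)` with
`ρ = u 0`, `v = u 1 / u 0`, `p = (γ-1)(u 2 - (u 1)²/(2 u 0))`, is
differentiable at every admissible `u` (`ρ > 0`, `p > 0`) and its gradient is
the vector of entropy variables
`w = (ρ/p)(p/ρ^γ)^(1/(α+γ)) ⋅ (-(α/(γ-1))(p/ρ) - v²/2, v, -1)`. -/
theorem harten_entropy_hasGradientAt
    (γ α : ℝ) (hγ : 1 < γ) (hα : 0 < α ∨ α < -γ)
    (u : EuclideanSpace ℝ (Fin 3))
    (hρ : 0 < u 0)
    (hp : 0 < (γ - 1) * (u 2 - (u 1) ^ 2 / (2 * u 0))) :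
    HasGradientAt
      (fun x : EuclideanSpace ℝ (Fin 3) =>
        -((γ + α) / (γ - 1)) * x 0 *
          ((γ - 1) * (x 2 - (x 1) ^ 2 / (2 * x 0)) / (x 0) ^ γ) ^ (1 / (α + γ)))
      ((WithLp.equiv 2 (Fin 3 → ℝ)).symm
        ![u 0 / ((γ - 1) * (u 2 - (u 1) ^ 2 / (2 * u 0))) *
            ((γ - 1) * (u 2 - (u 1) ^ 2 / (2 * u 0)) / (u 0) ^ γ) ^ (1 / (α + γ)) *
            (-(α / (γ - 1)) * ((γ - 1) * (u 2 - (u 1) ^ 2 / (2 * u 0)) / u 0)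
              - (u 1 / u 0) ^ 2 / 2),
          u 0 / ((γ - 1) * (u 2 - (u 1) ^ 2 / (2 * u 0))) *
            ((γ - 1) * (u 2 - (u 1) ^ 2 / (2 * u 0)) / (u 0) ^ γ) ^ (1 / (α + γ)) *
            (u 1 / u 0),
          u 0 / ((γ - 1) * (u 2 - (u 1) ^ 2 / (2 * u 0))) *
            ((γ - 1) * (u 2 - (u 1) ^ 2 / (2 * u 0)) / (u 0) ^ γ) ^ (1 / (α + γ)) *
            (-1)])
      u := by
  have hγ1 : γ - 1 ≠ 0 := sub_ne_zero.mpr hγ.ne'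
  have hαγ : α + γ ≠ 0 := by rcases hα with h | h <;> intro hc <;> linarith
  have hU := ((EuclideanSpace.proj 0).hasFDerivAt.mul_div_rpow_rpow γ (1 / (α + γ))
    (hasFDerivAt_pressure γ hρ.ne') hρ hp).const_mul (-((γ + α) / (γ - 1)))
  rw [hasGradientAt_iff_hasFDerivAt,
    show (γ - 1) * (u 2 - u 1 ^ 2 / (2 * u 0)) = pressure γ u from rfl]
  refine (hU.congr_of_eventuallyEq (.of_forall fun x => mul_assoc _ _ _)).congr_fderiv ?_
  ext y
  simp only [InnerProductSpace.toDual_apply_apply, PiLp.inner_apply, Fin.sum_univ_three,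
    PiLp.proj_apply, add_apply, smul_apply, sub_apply, smul_eq_mul, WithLp.equiv_symm_apply,
    Matrix.cons_val_zero, Matrix.cons_val_one, Matrix.cons_val_two,
    Matrix.head_cons, Matrix.tail_cons, RCLike.inner_apply, conj_trivial]
  generalize (pressure γ u / u 0 ^ γ) ^ (1 / (α + γ)) = q
  field_simp
  ring
end

section
/- Let γ > 1 and let α satisfy α > 0 or α < −γ. For every state (ρ, v, p) with ρ > 0 and p > 0, the entropy variables w = (ρ/p)(p/ρ^γ)^{1/(α+γ)} · (−(α/(γ−1))·(p/ρ) − v²/2, v, −1), the physical flux f(u) = (ρv, ρv² + p, (ρe + p)v) with ρe = p/(γ−1) + ρv²/2, and the flux potential ψ = ρ (p/ρ^γ)^{1/(α+γ)} v satisfy the flux-potential identity w · f(u) − ψ = U(u) · v, where U(u) = −((γ+α)/(γ−1)) · ρ (p/ρ^γ)^{1/(α+γ)} is Harten's entropy and U(u)·v is the associated entropy flux. -/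
/-- Flux-potential identity: for every admissible state, the entropy variables
`w`, the physical flux `f(u) = (ρv, ρv² + p, (ρe + p)v)` (with
`ρe = p/(γ-1) + ρv²/2`), and the flux potential `ψ` of Harten's entropy
`U(u) = -((γ+α)/(γ-1)) ρ (p/ρ^γ)^(1/(α+γ))` satisfy
`w ⬝ f(u) - ψ = U(u) ⋅ v`. -/
theorem harten_flux_potential_identity
    (γ α ρ v p : ℝ) (hγ : 1 < γ) (hα : 0 < α ∨ α < -γ)
    (hρ : 0 < ρ) (hp : 0 < p) :
    hartenW1 γ α ρ v p * (ρ * v)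
      + hartenW2 γ α ρ v p * (ρ * v ^ 2 + p)
      + hartenW3 γ α ρ v p * ((p / (γ - 1) + ρ * v ^ 2 / 2 + p) * v)
      - hartenPsi γ α ρ v p =
    (-((γ + α) / (γ - 1)) * ρ * (p / ρ ^ γ) ^ (1 / (α + γ))) * v := by
  unfold hartenW1 hartenW2 hartenW3 hartenPsi
  have h1 : γ - 1 ≠ 0 := by linarith
  have hp' : p ≠ 0 := hp.ne'
  have hρ' : ρ ≠ 0 := hρ.ne'
  field_simp
  ring
end
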